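/- Let B ~ N(0,1) and V ~ N⁺(0,τ²) (the normal distribution with mean 0 and variance τ² truncated below at zero) be independent random variables, τ > 0. Then the product VB has a Lebesgue density on ℝ that, at every t ≠ 0, is bounded above by the Lebesgue density at |t| of the Gamma distribution with shape parameter 1/2 and scale parameter τ. -/

import Mathlib

open MeasureTheory ProbabilityTheory
open scoped ENNReal

noncomputable section

namespace BSGS

/-- Lebesgue density of the Gaussian distribution with mean `m` and variance `v`. -/
def gpdf (m v x : ℝ) : ℝ :=
  (Real.sqrt (2 * Real.pi * v))⁻¹ * Real.exp (-(x - m) ^ 2 / (2 * v))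

/-- Gaussian measure on `ℝ` with mean `m` and variance `v`. -/
def gaussianM (m v : ℝ) : Measure ℝ :=
  volume.withDensity fun x => ENNReal.ofReal (gpdf m v x)

/-- The half-normal distribution `N⁺(0, τ²)` (`τ2 = τ²` is the variance parameter):
density `(2/(τ√(2π))) e^{-v²/(2τ²)}` on `(0, ∞)`. -/
def halfNormal (τ2 : ℝ) : Measure ℝ :=
  volume.withDensity fun x =>
    Set.indicator (Set.Ioi (0 : ℝ)) (fun x => ENNReal.ofReal (2 * gpdf 0 τ2 x)) x

/-- Lebesgue density of the Gamma distribution with shape `a` and **scale** `s`: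
`x^{a-1} e^{-x/s} / (Γ(a) s^a)` on `(0, ∞)`. -/
def gammaScalePDF (a s x : ℝ) : ℝ :=
  x ^ (a - 1) * Real.exp (-x / s) / (Real.Gamma a * s ^ a)

/-!
Given `V = v > 0`, the product `V B` is `N(0, v²)`, so `V B` has density
`t ↦ ∫ φ_{v²}(t) dN⁺(0, τ²)(v)`. For `m = |t| > 0` the exponent splits as
`v² / (2τ²) + m² / (2v²) = m / τ + u(v)² / 2` with `u(v) = v / τ - m / v`, and AM-GM,
`v + mτ / v ≥ 2√(mτ)`, bounds the prefactor `1 / v` by a multiple of `u'(v) = 1 / τ + m / v²`.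
Since `u` is injective on `(0, ∞)`, the substitution `u` bounds the remaining integral by a full
Gaussian integral, leaving `e^{-m/τ} / √(2π m τ)`, which is below the Gamma density
`e^{-m/τ} / √(π m τ)`.
-/

open Real Set
open scoped NNReal

theorem gaussianM_eq_gaussianReal (m : ℝ) {v : ℝ≥0} (hv : v ≠ 0) :
    gaussianM m v = gaussianReal m v := by
  rw [gaussianReal_of_var_ne_zero m hv]
  rfl

theorem two_mul_gpdf_zero_eq (v x : ℝ) :
    2 * gpdf 0 v x = 2 * (√(2 * π * v))⁻¹ * exp (-(2 * v)⁻¹ * x ^ 2) := by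
  rw [gpdf]
  ring_nf

theorem measurable_gpdf (m v : ℝ) : Measurable (gpdf m v) := by
  unfold gpdf
  fun_prop

theorem isProbabilityMeasure_halfNormal {v : ℝ} (hv : 0 < v) :
    IsProbabilityMeasure (halfNormal v) := by
  have hint : Integrable fun x => 2 * gpdf 0 v x := by
    simp_rw [two_mul_gpdf_zero_eq]
    exact (integrable_exp_neg_mul_sq (by positivity)).const_mul _
  constructor
  rw [halfNormal, withDensity_apply _ MeasurableSet.univ, Measure.restrict_univ,
    lintegral_indicator measurableSet_Ioi,
    ← ofReal_integral_eq_lintegral_ofReal hint.integrableOn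
      (ae_of_all _ fun x => by simp only [Pi.zero_apply, two_mul_gpdf_zero_eq]; positivity),
    ENNReal.ofReal_eq_one]
  simp_rw [two_mul_gpdf_zero_eq, integral_const_mul, integral_gaussian_Ioi, div_inv_eq_mul]
  field_simp

theorem lintegral_halfNormal {v : ℝ} {g : ℝ → ℝ≥0∞} (hg : Measurable g) :
    ∫⁻ x, g x ∂halfNormal v = ∫⁻ x in Ioi 0, ENNReal.ofReal (2 * gpdf 0 v x) * g x := by
  rw [halfNormal, lintegral_withDensity_eq_lintegral_mul _
    (((measurable_gpdf 0 v).const_mul 2).ennreal_ofReal.indicator measurableSet_Ioi) hg,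
    ← lintegral_indicator measurableSet_Ioi]
  congr with x
  by_cases hx : x ∈ Ioi 0 <;> simp [hx]

theorem map_mul_gaussianReal_eq_withDensity (μ : Measure ℝ) [SFinite μ] (hμ : μ {0} = 0) :
    (μ.prod (gaussianReal 0 1)).map (fun p => p.1 * p.2) =
      volume.withDensity fun t => ∫⁻ v, gaussianPDF 0 (.mk (v ^ 2) (sq_nonneg v)) t ∂μ := by
  ext s hs
  have hmul : Measurable fun p : ℝ × ℝ => p.1 * p.2 := by fun_prop
  have hslice : ∀ᵐ v ∂μ, gaussianReal 0 1 (Prod.mk v ⁻¹' ((fun p => p.1 * p.2) ⁻¹' s)) =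
      ∫⁻ t in s, gaussianPDF 0 (.mk (v ^ 2) (sq_nonneg v)) t := by
    filter_upwards [measure_eq_zero_iff_ae_notMem.1 hμ] with v hv
    have hv2 : (.mk (v ^ 2) (sq_nonneg v) : ℝ≥0) ≠ 0 := by
      simpa [← NNReal.coe_eq_zero] using hv
    change gaussianReal 0 1 ((v * ·) ⁻¹' s) = _
    rw [← Measure.map_apply (measurable_const_mul v) hs, gaussianReal_map_const_mul, mul_zero,
      mul_one, gaussianReal_of_var_ne_zero 0 hv2, withDensity_apply _ hs]
  rw [Measure.map_apply hmul hs, Measure.prod_apply (hmul hs), lintegral_congr_ae hslice,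
    withDensity_apply _ hs, lintegral_lintegral_swap]
  refine Measurable.aemeasurable ?_
  simp only [Function.uncurry_def, gaussianPDF, gaussianPDFReal, NNReal.coe_mk]
  fun_prop

theorem two_sqrt_le_add_div {a v : ℝ} (ha : 0 ≤ a) (hv : 0 < v) : 2 * √a ≤ v + a / v := by
  have h : v + a / v - 2 * √a = (v - √a) ^ 2 / v := by
    field_simp
    rw [sub_sq, sq_sqrt ha]
    ring
  nlinarith [div_nonneg (sq_nonneg (v - √a)) hv.le]

theorem gammaScalePDF_one_half {s x : ℝ} (hx : 0 ≤ x) :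
    gammaScalePDF (1 / 2) s x = exp (-x / s) / √(π * x * s) := by
  rw [gammaScalePDF, Gamma_one_half_eq, ← sqrt_eq_rpow,
    show (1 : ℝ) / 2 - 1 = -(1 / 2) by norm_num, rpow_neg hx, ← sqrt_eq_rpow,
    sqrt_mul (by positivity), sqrt_mul pi_pos.le]
  ring

theorem two_mul_gpdf_mul_gaussianPDFReal {τ v : ℝ} (hτ : 0 < τ) (hv : 0 < v) (t : ℝ) :
    2 * gpdf 0 (τ ^ 2) v * gaussianPDFReal 0 (.mk (v ^ 2) (sq_nonneg v)) t =
      (π * τ * v)⁻¹ * (exp (-|t| / τ) * exp (-(v / τ - |t| / v) ^ 2 / 2)) := by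
  have hsqrt : ∀ a : ℝ, 0 < a → √(2 * π * a ^ 2) = √(2 * π) * a := fun a ha => by
    rw [sqrt_mul (by positivity), sqrt_sq ha.le]
  have h2π : √(2 * π) * √(2 * π) = 2 * π := mul_self_sqrt (by positivity)
  rw [gpdf, gaussianPDFReal, NNReal.coe_mk, hsqrt τ hτ, hsqrt v hv]
  have hexp : exp (-(v - 0) ^ 2 / (2 * τ ^ 2)) * exp (-(t - 0) ^ 2 / (2 * v ^ 2)) =
      exp (-|t| / τ) * exp (-(v / τ - |t| / v) ^ 2 / 2) := by
    rw [← exp_add, ← exp_add, sub_zero, sub_zero, ← sq_abs t]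
    congr 1
    field_simp
    ring
  calc _ = 2 / (√(2 * π) * √(2 * π)) * (τ * v)⁻¹ *
        (exp (-(v - 0) ^ 2 / (2 * τ ^ 2)) * exp (-(t - 0) ^ 2 / (2 * v ^ 2))) := by
        field_simp
    _ = _ := by
        rw [h2π, hexp]
        field_simp

theorem two_mul_gpdf_mul_gaussianPDFReal_le {τ v t : ℝ} (hτ : 0 < τ) (hv : 0 < v) (ht : t ≠ 0) :
    2 * gpdf 0 (τ ^ 2) v * gaussianPDFReal 0 (.mk (v ^ 2) (sq_nonneg v)) t ≤
      gammaScalePDF (1 / 2) τ |t| *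
        ((1 / τ + |t| / v ^ 2) * gaussianPDFReal 0 1 (v / τ - |t| / v)) := by
  have hm : 0 < |t| := abs_pos.2 ht
  have hden : √(π * |t| * τ) * √(2 * π) ≤ π * τ * v * (1 / τ + |t| / v ^ 2) :=
    calc √(π * |t| * τ) * √(2 * π) ≤ √((2 * π * √(|t| * τ)) ^ 2) := by
          rw [← sqrt_mul (by positivity), mul_pow, mul_pow, sq_sqrt (by positivity)]
          exact sqrt_le_sqrt (by nlinarith [mul_pos (mul_pos pi_pos pi_pos) (mul_pos hm hτ)])
      _ = π * (2 * √(|t| * τ)) := by rw [sqrt_sq (by positivity)]; ring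
      _ ≤ π * (v + |t| * τ / v) := by gcongr; exact two_sqrt_le_add_div (by positivity) hv
      _ = π * τ * v * (1 / τ + |t| / v ^ 2) := by field_simp
  have hcoef : (π * τ * v)⁻¹ ≤ (1 / τ + |t| / v ^ 2) / (√(π * |t| * τ) * √(2 * π)) := by
    rw [inv_eq_one_div, div_le_div_iff₀ (by positivity) (by positivity)]
    linarith
  calc _ = (π * τ * v)⁻¹ * (exp (-|t| / τ) * exp (-(v / τ - |t| / v) ^ 2 / 2)) :=
        two_mul_gpdf_mul_gaussianPDFReal hτ hv t
    _ ≤ (1 / τ + |t| / v ^ 2) / (√(π * |t| * τ) * √(2 * π)) *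
        (exp (-|t| / τ) * exp (-(v / τ - |t| / v) ^ 2 / 2)) := by gcongr
    _ = _ := by
        rw [gammaScalePDF_one_half hm.le, gaussianPDFReal]
        simp only [NNReal.coe_one, mul_one, sub_zero]
        ring

theorem lintegral_abs_deriv_mul_gaussianPDF_comp_le_one {s : Set ℝ} {f f' : ℝ → ℝ}
    (hs : MeasurableSet s) (hf' : ∀ x ∈ s, HasDerivWithinAt f (f' x) s x) (hf : InjOn f s) :
    ∫⁻ x in s, ENNReal.ofReal |f' x| * gaussianPDF 0 1 (f x) ≤ 1 := by
  rw [← lintegral_image_eq_lintegral_abs_deriv_mul hs hf' hf]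
  exact setLIntegral_le_lintegral _ _ |>.trans_eq (lintegral_gaussianPDF_eq_one 0 one_ne_zero)

theorem lintegral_gaussianPDF_sq_halfNormal_le {τ t : ℝ} (hτ : 0 < τ) (ht : t ≠ 0) :
    ∫⁻ v, gaussianPDF 0 (.mk (v ^ 2) (sq_nonneg v)) t ∂halfNormal (τ ^ 2) ≤
      ENNReal.ofReal (gammaScalePDF (1 / 2) τ |t|) := by
  have hderiv : ∀ v ∈ Ioi (0 : ℝ),
      HasDerivWithinAt (fun v => v / τ - |t| / v) (1 / τ + |t| / v ^ 2) (Ioi 0) v := by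
    intro v hv
    have h := ((hasDerivAt_id' v).div_const τ).sub
      ((hasDerivAt_const v |t|).div (hasDerivAt_id' v) (ne_of_gt hv))
    exact h.hasDerivWithinAt.congr_deriv (by ring)
  have hinj : InjOn (fun v => v / τ - |t| / v) (Ioi 0) := by
    refine StrictMonoOn.injOn fun a ha b _ hab => ?_
    have : |t| / b ≤ |t| / a := div_le_div_of_nonneg_left (abs_nonneg t) ha hab.le
    have : a / τ < b / τ := by gcongr
    linarith
  rw [lintegral_halfNormal (by simp only [gaussianPDF, gaussianPDFReal, NNReal.coe_mk]; fun_prop)]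
  calc _ ≤ ∫⁻ v in Ioi 0, ENNReal.ofReal (gammaScalePDF (1 / 2) τ |t|) *
        (ENNReal.ofReal |1 / τ + |t| / v ^ 2| * gaussianPDF 0 1 (v / τ - |t| / v)) := by
        refine setLIntegral_mono' measurableSet_Ioi fun v (hv : 0 < v) => ?_
        rw [abs_of_pos (a := 1 / τ + |t| / v ^ 2) (by positivity), gaussianPDF, gaussianPDF,
          ← ENNReal.ofReal_mul (by rw [gpdf]; positivity), ← ENNReal.ofReal_mul (by positivity),
          ← ENNReal.ofReal_mul (by rw [gammaScalePDF_one_half (abs_nonneg t)]; positivity)]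
        exact ENNReal.ofReal_le_ofReal (two_mul_gpdf_mul_gaussianPDFReal_le hτ hv ht)
    _ ≤ ENNReal.ofReal (gammaScalePDF (1 / 2) τ |t|) * 1 := by
        rw [lintegral_const_mul' _ _ ENNReal.ofReal_ne_top]
        gcongr
        exact lintegral_abs_deriv_mul_gaussianPDF_comp_le_one measurableSet_Ioi hderiv hinj
    _ = _ := mul_one _

/-- **Density bound for the product of a standard normal and a half-normal** (Appendix
B.3.2). If `B ~ N(0,1)` and `V ~ N⁺(0,τ²)` are independent, then `V B` has a Lebesgue
density which, at every `t ≠ 0`, is bounded above by the density of the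
`Gamma(1/2, τ)` distribution (shape `1/2`, scale `τ`) evaluated at `|t|`. -/
theorem halfNormal_times_normal_density_bound
    {Ω : Type*} [MeasurableSpace Ω] (P : Measure Ω) [IsProbabilityMeasure P]
    (B V : Ω → ℝ) (τ : ℝ) (hτ : 0 < τ)
    (hB : Measure.map B P = gaussianM 0 1)
    (hV : Measure.map V P = halfNormal (τ ^ 2))
    (hBV : IndepFun B V P) :
    ∃ d : ℝ → ℝ,
      Measure.map (fun ω => V ω * B ω) P =
        volume.withDensity (fun t => ENNReal.ofReal (d t)) ∧
      ∀ t : ℝ, t ≠ 0 → d t ≤ gammaScalePDF (1 / 2) τ |t| := by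
  have := isProbabilityMeasure_halfNormal (pow_pos hτ 2)
  have hγ : gaussianM 0 1 = gaussianReal 0 1 := by
    simpa using gaussianM_eq_gaussianReal (v := 1) 0 one_ne_zero
  rw [hγ] at hB
  have hBm : AEMeasurable B P := .of_map_ne_zero (hB ▸ IsProbabilityMeasure.ne_zero _)
  have hVm : AEMeasurable V P := .of_map_ne_zero (hV ▸ IsProbabilityMeasure.ne_zero _)
  have hlaw : P.map (fun ω => V ω * B ω) = volume.withDensity fun t =>
      ∫⁻ v, gaussianPDF 0 (.mk (v ^ 2) (sq_nonneg v)) t ∂halfNormal (τ ^ 2) := by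
    rw [← map_mul_gaussianReal_eq_withDensity (halfNormal (τ ^ 2))
      (withDensity_absolutelyContinuous _ _ (measure_singleton 0)), ← hV, ← hB,
      ← (indepFun_iff_map_prod_eq_prod_map_map hVm hBm).1 hBV.symm,
      AEMeasurable.map_map_of_aemeasurable (by fun_prop) (hVm.prodMk hBm)]
    rfl
  refine ⟨fun t => (∫⁻ v, gaussianPDF 0 (.mk (v ^ 2) (sq_nonneg v)) t ∂halfNormal (τ ^ 2)).toReal,
    ?_, fun t ht => ENNReal.toReal_le_of_le_ofReal
      (by rw [gammaScalePDF_one_half (abs_nonneg t)]; positivity)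
      (lintegral_gaussianPDF_sq_halfNormal_le hτ ht)⟩
  rw [hlaw]
  refine withDensity_congr_ae ?_
  filter_upwards [measure_eq_zero_iff_ae_notMem.1 (measure_singleton 0)] with t ht
  exact (ENNReal.ofReal_toReal
    (ne_top_of_le_ne_top ENNReal.ofReal_ne_top (lintegral_gaussianPDF_sq_halfNormal_le hτ ht))).symm

end BSGS
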